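/- arXiv:2309.13850 — 2 statements merged into one kernel-verified Lean document; each statement's English description precedes it below -/
import Mathlib

section
/- Suppose Softmax(u) = Softmax(v) for all inputs of the form u_i = β_iᵀx + b_i and v_i = β_i'ᵀx + b_i' ranging over x in a set of positive Lebesgue measure in ℝᵈ, where Softmax: ℝᵏ → ℝᵏ is the softmax function. Then there exist c₁ ∈ ℝᵈ and c₀ ∈ ℝ such that β_i = β_i' + c₁ and b_i = b_i' + c₀ for all i ∈ {1,…,k}. Moreover, if additionally β_k = β_k' = 0 and b_k = b_k' = 0, then β_i = β_i' and b_i = b_i' for all i. -/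
/-! The ratio of two softmax outputs forgets the normalization, so equal softmax outputs have
equal pairwise differences of scores; for affine scores these differences are affine in `x`, and
an affine function vanishing on a set of positive Lebesgue measure is identically zero, since a
proper affine subspace is Lebesgue-null. -/

open Finset MeasureTheory RealInnerProductSpace

noncomputable def softmax (k : ℕ) (v : Fin k → ℝ) : Fin k → ℝ :=
  fun i => Real.exp (v i) / ∑ j, Real.exp (v j)

theorem softmax_div_softmax {k : ℕ} (v : Fin k → ℝ) (i j : Fin k) :
    softmax k v i / softmax k v j = Real.exp (v i - v j) := by
  have hsum : ∑ l, Real.exp (v l) ≠ 0 :=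
    (Finset.sum_pos (fun l _ => Real.exp_pos (v l)) ⟨i, Finset.mem_univ i⟩).ne'
  rw [softmax, softmax, div_div_div_cancel_right₀ hsum, Real.exp_sub]

theorem sub_eq_sub_of_softmax_eq {k : ℕ} {u v : Fin k → ℝ} (h : softmax k u = softmax k v)
    (i j : Fin k) : u i - u j = v i - v j :=
  Real.exp_injective <| by rw [← softmax_div_softmax, ← softmax_div_softmax, h]

theorem AffineMap.eq_zero_of_eqOn_zero {E : Type*} [NormedAddCommGroup E] [NormedSpace ℝ E]
    [MeasurableSpace E] [BorelSpace E] [FiniteDimensional ℝ E]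
    (μ : Measure E) [μ.IsAddHaarMeasure] (f : E →ᵃ[ℝ] ℝ) {S : Set E} (hS : μ S ≠ 0)
    (hf : Set.EqOn f 0 S) : f = 0 := by
  let Z : AffineSubspace ℝ E := (AffineSubspace.mk' 0 ⊥).comap f
  have hZ : ∀ x, x ∈ Z ↔ f x = 0 := by
    simp [Z, AffineSubspace.mem_comap, AffineSubspace.mem_mk']
  have hSZ : S ⊆ Z := fun x hx => (hZ x).2 (hf hx)
  have hZ_top : Z = ⊤ := by
    by_contra hne
    exact hS (measure_mono_null hSZ (Measure.addHaar_affineSubspace μ Z hne))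
  ext x
  simpa using (hZ x).1 (hZ_top ▸ AffineSubspace.mem_top ℝ E x)

theorem eq_zero_of_inner_add_eq_zero_on {E : Type*} [NormedAddCommGroup E]
    [InnerProductSpace ℝ E] [MeasurableSpace E] [BorelSpace E] [FiniteDimensional ℝ E]
    (μ : Measure E) [μ.IsAddHaarMeasure] {a : E} {c : ℝ} {S : Set E} (hS : μ S ≠ 0)
    (h : ∀ x ∈ S, ⟪a, x⟫ + c = 0) : a = 0 ∧ c = 0 := by
  let f : E →ᵃ[ℝ] ℝ := (innerSL ℝ a).toLinearMap.toAffineMap + AffineMap.const ℝ E c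
  have hf : f = 0 := AffineMap.eq_zero_of_eqOn_zero μ f hS fun x hx => by simpa [f] using h x hx
  have hc : c = 0 := by simpa [f] using congrArg (· 0) hf
  refine ⟨?_, hc⟩
  have haa : ⟪a, a⟫ = 0 := by simpa [f, hc] using congrArg (· a) hf
  exact inner_self_eq_zero.1 haa

/-- If the softmax of two affine-in-`x` score vectors agree for `x` in a set of
positive Lebesgue measure, then the parameters agree up to a common translation;
under the normalization that the last parameters vanish, they agree exactly. -/
theorem softmax_affine_eq_iff_translation
    (d k : ℕ) (β β' : Fin (k + 1) → EuclideanSpace ℝ (Fin d))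
    (b b' : Fin (k + 1) → ℝ)
    (S : Set (EuclideanSpace ℝ (Fin d))) (hS : 0 < volume S)
    (heq : ∀ x ∈ S,
      softmax (k + 1) (fun i => ⟪β i, x⟫ + b i) =
        softmax (k + 1) (fun i => ⟪β' i, x⟫ + b' i)) :
    (∃ (c₁ : EuclideanSpace ℝ (Fin d)) (c₀ : ℝ),
      ∀ i, β i = β' i + c₁ ∧ b i = b' i + c₀) ∧
    (β (Fin.last k) = 0 → β' (Fin.last k) = 0 →
      b (Fin.last k) = 0 → b' (Fin.last k) = 0 →
      ∀ i, β i = β' i ∧ b i = b' i) := by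
  set L := Fin.last k
  have key : ∀ i, β i - β L = β' i - β' L ∧ b i - b L = b' i - b' L := by
    intro i
    obtain ⟨hβ, hb⟩ := eq_zero_of_inner_add_eq_zero_on volume
      (a := (β i - β L) - (β' i - β' L)) (c := (b i - b L) - (b' i - b' L)) hS.ne'
      fun x hx => by
        have := sub_eq_sub_of_softmax_eq (heq x hx) i L
        simp only [inner_sub_left] at this ⊢
        linarith
    exact ⟨sub_eq_zero.1 hβ, sub_eq_zero.1 hb⟩
  refine ⟨⟨β L - β' L, b L - b' L, fun i => ⟨?_, ?_⟩⟩, fun h₁ h₂ h₃ h₄ i => ?_⟩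
  · rw [eq_add_of_sub_eq (key i).1]; abel
  · linarith [(key i).2]
  · simpa [h₁, h₂, h₃, h₄] using key i
end

section
/- Finite mixtures of univariate location-scale Gaussian densities are identifiable: if ∑_{i=1}^k π_i f(y|μ_i, σ_i) = ∑_{i=1}^{k'} π_i' f(y|μ_i', σ_i') for all y ∈ ℝ, where f(y|μ,σ) is the Gaussian density with mean μ and variance σ, π_i, π_i' > 0 sum to 1 respectively, and the pairs (μ_i, σ_i) are pairwise distinct as are the (μ_i', σ_i'), then k = k' and there is a permutation τ of {1,…,k} with π_i = π_{τ(i)}', μ_i = μ_{τ(i)}', σ_i = σ_{τ(i)}' for all i. -/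
/-!
Write `f(y|μ,σ) = c · exp(a y² + b y)` with `a = -1/(2σ)`, `b = μ/σ` and `c ≠ 0`; for `σ > 0`
the map `(μ, σ) ↦ (a, b)` is injective. Ordered lexicographically in `(a, b)`, each function
`exp(a y² + b y)` is `o` of the next as `y → ∞`, so in a vanishing finite combination the top
coefficient vanishes: these functions, hence the Gaussian densities, are linearly independent.
Equal mixtures therefore have equal mixing measures `∑ πᵢ δ_(μᵢ,σᵢ)`, and since the atoms are
distinct with nonzero weights, comparing atoms yields the bijection between the components.
-/

open Finset

/-- Univariate Gaussian density with mean `μ` and variance `σ`. -/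
noncomputable def gaussianDensity (y μ σ : ℝ) : ℝ :=
  (1 / Real.sqrt (2 * Real.pi * σ)) * Real.exp (-(y - μ) ^ 2 / (2 * σ))

open Filter Asymptotics

theorem linearIndependent_of_isLittleO {ι 𝕜 α : Type*} [LinearOrder ι] [NormedField 𝕜]
    {l : Filter α} [l.NeBot] {f : ι → α → 𝕜} (hf : ∀ i, ∀ᶠ x in l, f i x ≠ 0)
    (hlt : ∀ ⦃i j⦄, i < j → f i =o[l] f j) : LinearIndependent 𝕜 f := by
  classical
  rw [linearIndependent_iff']
  intro s
  induction s using Finset.induction_on_max with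
  | empty => simp
  | insert a s has ih =>
    intro c hc
    rw [sum_insert fun ha => (has a ha).false] at hc
    have hrest : (∑ i ∈ s, c i • f i) =o[l] f a :=
      IsLittleO.sum fun i hi => (hlt (has i hi)).const_smul_left (c i)
    have hca : c a = 0 := by
      by_contra hca
      have hself : (c a • f a) =o[l] f a := by
        rw [eq_neg_of_add_eq_zero_left hc]
        exact hrest.neg_left
      exact isLittleO_irrefl (hf a).frequently
        ((isBigO_self_const_mul hca (f a) l).trans_isLittleO hself)
    rw [hca, zero_smul, zero_add] at hc
    intro i hi
    rcases mem_insert.1 hi with rfl | hi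
    exacts [hca, ih c hc i hi]

theorem tendsto_quadratic_atBot {a b : ℝ} (h : a < 0 ∨ a = 0 ∧ b < 0) :
    Tendsto (fun y : ℝ => a * y ^ 2 + b * y) atTop atBot := by
  rcases h with ha | ⟨rfl, hb⟩
  · have hlin : Tendsto (fun y : ℝ => a * y + b) atTop atBot :=
      tendsto_atBot_add_const_right _ b (tendsto_id.const_mul_atTop_of_neg ha)
    exact (tendsto_id.atTop_mul_atBot₀ hlin).congr fun y => by simp only [id]; ring
  · simpa using tendsto_id.const_mul_atTop_of_neg hb

theorem isLittleO_exp_quadratic {p q : ℝ × ℝ} (h : toLex p < toLex q) :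
    (fun y : ℝ => Real.exp (p.1 * y ^ 2 + p.2 * y)) =o[atTop]
      fun y => Real.exp (q.1 * y ^ 2 + q.2 * y) := by
  rw [isLittleO_iff_tendsto fun y hy => absurd hy (Real.exp_pos _).ne']
  have hlex : p.1 - q.1 < 0 ∨ p.1 - q.1 = 0 ∧ p.2 - q.2 < 0 := by
    rw [Prod.Lex.toLex_lt_toLex] at h
    rcases h with h | ⟨h1, h2⟩
    · exact .inl (sub_neg.2 h)
    · exact .inr ⟨sub_eq_zero.2 h1, sub_neg.2 h2⟩
  refine (Real.tendsto_exp_atBot.comp (tendsto_quadratic_atBot hlex)).congr fun y => ?_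
  simp only [Function.comp_apply, ← Real.exp_sub]
  ring_nf

theorem linearIndependent_exp_quadratic :
    LinearIndependent ℝ fun p : ℝ × ℝ => fun y : ℝ => Real.exp (p.1 * y ^ 2 + p.2 * y) :=
  (linearIndependent_of_isLittleO (l := atTop)
    (f := fun p : ℝ ×ₗ ℝ => fun y : ℝ => Real.exp ((ofLex p).1 * y ^ 2 + (ofLex p).2 * y))
    (fun _ => .of_forall fun _ => (Real.exp_pos _).ne')
    fun _ _ h => isLittleO_exp_quadratic h).comp toLex toLex.injective

theorem gaussianDensity_eq_mul_exp_quadratic (y μ σ : ℝ) :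
    gaussianDensity y μ σ = Real.exp (-μ ^ 2 / (2 * σ)) / Real.sqrt (2 * Real.pi * σ) *
      Real.exp (-(2 * σ)⁻¹ * y ^ 2 + μ / σ * y) := by
  rw [gaussianDensity, one_div_mul_eq_div, div_mul_eq_mul_div, ← Real.exp_add]
  ring_nf

theorem linearIndepOn_gaussianDensity :
    LinearIndepOn ℝ (fun p : ℝ × ℝ => fun y => gaussianDensity y p.1 p.2) {p | 0 < p.2} := by
  set θ : ℝ × ℝ → ℝ × ℝ := fun p => (-(2 * p.2)⁻¹, p.1 / p.2)
  have hθ : Set.InjOn θ {p | 0 < p.2} := by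
    rintro ⟨μ, σ⟩ hσ ⟨μ', σ'⟩ - h
    simp only [θ, Prod.mk.injEq, neg_inj, inv_inj, mul_eq_mul_left_iff, two_ne_zero, or_false] at h
    obtain ⟨rfl, h⟩ := h
    rw [div_left_inj' (ne_of_gt hσ)] at h
    rw [h]
  have hscale : ∀ p : {p : ℝ × ℝ // 0 < p.2},
      Real.exp (-p.1.1 ^ 2 / (2 * p.1.2)) / Real.sqrt (2 * Real.pi * p.1.2) ≠ 0 := fun p => by
    have := p.2
    positivity
  rw [LinearIndepOn]
  convert (linearIndependent_exp_quadratic.comp (θ ∘ Subtype.val)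
    (Set.injOn_iff_injective.1 hθ)).units_smul fun p => Units.mk0 _ (hscale p) using 1
  ext p y
  simp [θ, gaussianDensity_eq_mul_exp_quadratic]

theorem sum_single_eq_of_gaussian_mixture_eq {ι κ : Type*} {s : Finset ι} {t : Finset κ}
    {p : ι → ℝ × ℝ} {q : κ → ℝ × ℝ} {w : ι → ℝ} {w' : κ → ℝ}
    (hp : ∀ i ∈ s, 0 < (p i).2) (hq : ∀ j ∈ t, 0 < (q j).2)
    (h : ∀ y, ∑ i ∈ s, w i * gaussianDensity y (p i).1 (p i).2 =
      ∑ j ∈ t, w' j * gaussianDensity y (q j).1 (q j).2) :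
    ∑ i ∈ s, Finsupp.single (p i) (w i) = ∑ j ∈ t, Finsupp.single (q j) (w' j) := by
  refine linearIndepOn_iffₛ.1 linearIndepOn_gaussianDensity _
    (sum_mem fun i hi => Finsupp.single_mem_supported ℝ _ (hp i hi)) _
    (sum_mem fun j hj => Finsupp.single_mem_supported ℝ _ (hq j hj)) ?_
  ext y
  simpa [map_sum, Finsupp.linearCombination_single] using h y

theorem Finsupp.sum_single_apply_of_injOn {ι α M : Type*} [AddCommMonoid M] {s : Finset ι}
    {f : ι → α} (hf : Set.InjOn f s) (w : ι → M) {i : ι} (hi : i ∈ s) :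
    (∑ j ∈ s, single (f j) (w j)) (f i) = w i := by
  classical
  rw [Finsupp.finsetSum_apply, sum_eq_single_of_mem i hi fun j hj hji => ?_, single_eq_same]
  exact single_eq_of_ne fun h => hji (hf hj hi h.symm)

theorem Finsupp.exists_injOn_of_sum_single_eq {ι κ α M : Type*} [Nonempty κ] [AddCommMonoid M]
    {s : Finset ι} {t : Finset κ} {f : ι → α} {g : κ → α} {w : ι → M} {w' : κ → M}
    (hf : Set.InjOn f s) (hg : Set.InjOn g t) (hw : ∀ i ∈ s, w i ≠ 0)
    (h : ∑ i ∈ s, single (f i) (w i) = ∑ j ∈ t, single (g j) (w' j)) :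
    ∃ m : ι → κ, Set.MapsTo m s t ∧ Set.InjOn m s ∧ ∀ i ∈ s, g (m i) = f i ∧ w' (m i) = w i := by
  have hmatch : ∀ i ∈ s, ∃ j ∈ t, g j = f i ∧ w' j = w i := by
    intro i hi
    have hval := congrArg (· (f i)) h
    simp only [sum_single_apply_of_injOn hf w hi, finsetSum_apply] at hval
    obtain ⟨j, hj, hne⟩ := exists_ne_zero_of_sum_ne_zero (hval ▸ hw i hi)
    obtain ⟨hji, -⟩ := single_apply_ne_zero.1 hne
    refine ⟨j, hj, hji.symm, ?_⟩
    rw [← sum_single_apply_of_injOn hg w' hj, ← hji, ← h, sum_single_apply_of_injOn hf w hi]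
  choose! m hmt hm using hmatch
  refine ⟨m, hmt, fun i hi i' hi' hii' => hf hi hi' ?_, hm⟩
  rw [← (hm i hi).1, ← (hm i' hi').1, hii']

theorem Finset.exists_perm_eqOn_of_injOn {α : Type*} (s : Finset α) {m : α → α}
    (hm : Set.InjOn m s) : ∃ τ : Equiv.Perm α, ∀ a ∈ s, τ a = m a := by
  obtain ⟨τ, hτ⟩ := Equiv.Perm.exists_extending_pair (fun a : s => (a : α)) (fun a : s => m a)
    Subtype.val_injective (Set.injOn_iff_injective.1 hm)
  exact ⟨τ, fun a ha => hτ ⟨a, ha⟩⟩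

theorem gaussian_mixture_identifiable_general
    (k k' : ℕ) (π πp : ℕ → ℝ) (μ μp σ σp : ℕ → ℝ)
    (hπ : ∀ i < k, 0 < π i) (hπp : ∀ i < k', 0 < πp i)
    (hσ : ∀ i < k, 0 < σ i) (hσp : ∀ i < k', 0 < σp i)
    (hdist : ∀ i < k, ∀ j < k, i ≠ j → (μ i, σ i) ≠ (μ j, σ j))
    (hdist' : ∀ i < k', ∀ j < k', i ≠ j → (μp i, σp i) ≠ (μp j, σp j))
    (heq : ∀ y : ℝ,
      ∑ i ∈ range k, π i * gaussianDensity y (μ i) (σ i) =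
        ∑ i ∈ range k', πp i * gaussianDensity y (μp i) (σp i)) :
    k = k' ∧ ∃ τ : Equiv.Perm ℕ, ∀ i < k, τ i < k' ∧
      π i = πp (τ i) ∧ μ i = μp (τ i) ∧ σ i = σp (τ i) := by
  have hinj : Set.InjOn (fun i => (μ i, σ i)) (range k) := fun i hi j hj hij =>
    by_contra fun hne => hdist i (mem_range.1 hi) j (mem_range.1 hj) hne hij
  have hinj' : Set.InjOn (fun j => (μp j, σp j)) (range k') := fun i hi j hj hij =>
    by_contra fun hne => hdist' i (mem_range.1 hi) j (mem_range.1 hj) hne hij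
  have hmix := sum_single_eq_of_gaussian_mixture_eq (p := fun i => (μ i, σ i))
    (q := fun j => (μp j, σp j)) (fun i hi => hσ i (mem_range.1 hi))
    (fun j hj => hσp j (mem_range.1 hj)) heq
  obtain ⟨m, hmaps, hminj, hm⟩ := Finsupp.exists_injOn_of_sum_single_eq hinj hinj'
    (fun i hi => (hπ i (mem_range.1 hi)).ne') hmix
  obtain ⟨m', hmaps', hminj', -⟩ := Finsupp.exists_injOn_of_sum_single_eq hinj' hinj
    (fun j hj => (hπp j (mem_range.1 hj)).ne') hmix.symm
  have hk : k = k' := by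
    simpa using (card_le_card_of_injOn m hmaps hminj).antisymm
      (card_le_card_of_injOn m' hmaps' hminj')
  obtain ⟨τ, hτ⟩ := exists_perm_eqOn_of_injOn (range k) hminj
  refine ⟨hk, τ, fun i hi => ?_⟩
  obtain ⟨hpair, hweight⟩ := hm i (mem_range.2 hi)
  obtain ⟨hμ, hσ⟩ := Prod.mk.inj hpair
  rw [hτ i (mem_range.2 hi)]
  exact ⟨mem_range.1 (hmaps (mem_range.2 hi)), hweight.symm, hμ.symm, hσ.symm⟩

/-- Identifiability of finite mixtures of location-scale Gaussian densities. -/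
theorem gaussian_mixture_identifiable
    (k k' : ℕ) (π πp : ℕ → ℝ) (μ μp σ σp : ℕ → ℝ)
    (hπ : ∀ i < k, 0 < π i) (hπp : ∀ i < k', 0 < πp i)
    (hσ : ∀ i < k, 0 < σ i) (hσp : ∀ i < k', 0 < σp i)
    (hsum : ∑ i ∈ range k, π i = 1) (hsum' : ∑ i ∈ range k', πp i = 1)
    (hdist : ∀ i < k, ∀ j < k, i ≠ j → (μ i, σ i) ≠ (μ j, σ j))
    (hdist' : ∀ i < k', ∀ j < k', i ≠ j → (μp i, σp i) ≠ (μp j, σp j))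
    (heq : ∀ y : ℝ,
      ∑ i ∈ range k, π i * gaussianDensity y (μ i) (σ i) =
        ∑ i ∈ range k', πp i * gaussianDensity y (μp i) (σp i)) :
    k = k' ∧ ∃ τ : Equiv.Perm ℕ, ∀ i < k, τ i < k' ∧
      π i = πp (τ i) ∧ μ i = μp (τ i) ∧ σ i = σp (τ i) :=
  gaussian_mixture_identifiable_general k k' π πp μ μp σ σp hπ hπp hσ hσp hdist hdist' heq
end
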